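/- Under the regularity assumptions, for any two probability distributions ν₁, ν₂ on {0,1}^n, the transition kernel P(π) of the MDP with Bernoulli treatments satisfies W_{d_{E,3}}(ν₁ P(π), ν₂ P(π)) ≤ C·W_{d_{E,3}}(ν₁, ν₂) + 1. -/

import Mathlib

open Finset Filter Topology

noncomputable section

namespace MRT

/-- The state space: binary outcomes for each of the `n` units. -/
abbrev State (n : ℕ) := Fin n → Bool

variable {n : ℕ}

/-- `zc Nbr y i` is `Z_i(y) = ∑_{j ∈ 𝒩_i} y_j`, the number of active neighbors of `i`. -/
def zc (Nbr : Fin n → Finset (Fin n)) (y : State n) (i : Fin n) : ℝ :=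
  ∑ j ∈ Nbr i, (if y j then (1 : ℝ) else 0)

/-- Probability that coordinate `i` is `1` at the next step, starting from state `y`,
under Bernoulli(π i) treatments. -/
def succProb (Nbr : Fin n → Finset (Fin n)) (f : Fin n → Bool → Bool → ℝ → ℝ)
    (π : Fin n → ℝ) (y : State n) (i : Fin n) : ℝ :=
  π i * f i (y i) true (zc Nbr y i) + (1 - π i) * f i (y i) false (zc Nbr y i)

/-- Transition kernel `P(π)` of the MDP with Bernoulli treatments. -/
def kernel (Nbr : Fin n → Finset (Fin n)) (f : Fin n → Bool → Bool → ℝ → ℝ)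
    (π : Fin n → ℝ) (y y' : State n) : ℝ :=
  ∏ i, if y' i then succProb Nbr f π y i else 1 - succProb Nbr f π y i

/-- One-step pushforward `ν P(π)` of a distribution `ν` under the kernel. -/
def step (Nbr : Fin n → Finset (Fin n)) (f : Fin n → Bool → Bool → ℝ → ℝ)
    (π : Fin n → ℝ) (ν : State n → ℝ) : State n → ℝ :=
  fun y' => ∑ y, ν y * kernel Nbr f π y y'

/-- `ν` is a probability distribution on `{0,1}^n`. -/
def IsDist (ν : State n → ℝ) : Prop := (∀ y, 0 ≤ ν y) ∧ ∑ y, ν y = 1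

/-- `μ` is a stationary probability distribution for the kernel. -/
def IsStationary (Nbr : Fin n → Finset (Fin n)) (f : Fin n → Bool → Bool → ℝ → ℝ)
    (π : Fin n → ℝ) (μ : State n → ℝ) : Prop :=
  IsDist μ ∧ step Nbr f π μ = μ

/-- Expectation of `g` under the (finitely supported) distribution `ν`. -/
def expect (ν : State n → ℝ) (g : State n → ℝ) : ℝ := ∑ y, ν y * g y

/-- `γ` is a coupling of `ν₁` and `ν₂`. -/
def IsCoupling (γ : State n × State n → ℝ) (ν₁ ν₂ : State n → ℝ) : Prop :=
  (∀ p, 0 ≤ γ p) ∧ (∀ x, ∑ y, γ (x, y) = ν₁ x) ∧ (∀ y, ∑ x, γ (x, y) = ν₂ y)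

/-- `∑ i |x_i - y_i|` for binary vectors. -/
def hamming (x y : State n) : ℝ := ∑ i : Fin n, (if x i = y i then (0:ℝ) else 1)

/-- The `L1`-Wasserstein distance between two distributions on `{0,1}^n`. -/
def WL1 (ν₁ ν₂ : State n → ℝ) : ℝ :=
  sInf {c | ∃ γ, IsCoupling γ ν₁ ν₂ ∧ c = ∑ p : State n × State n, γ p * hamming p.1 p.2}

/-- `∑_{j ∈ 𝒩_i} |x_j - y_j|` for binary vectors. -/
def nbrDiff (Nbr : Fin n → Finset (Fin n)) (i : Fin n) (x y : State n) : ℝ :=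
  ∑ j ∈ Nbr i, (if x j = y j then (0:ℝ) else 1)

/-- The graph-dependent Wasserstein distance `W_{d_{E,k}}`. -/
def WdE (Nbr : Fin n → Finset (Fin n)) (k : ℕ) (ν₁ ν₂ : State n → ℝ) : ℝ :=
  sInf {c | ∃ γ, IsCoupling γ ν₁ ν₂ ∧
    c = ⨆ i : Fin n,
      (∑ p : State n × State n, γ p * (nbrDiff Nbr i p.1 p.2) ^ k) ^ ((k : ℝ)⁻¹)}

/-- Multilinear extension of `f i` to probabilities `p, w ∈ [0,1]`:
`f_i(p,w,z) = a_i(z) + b_i(z) w + c_i(z) p + d_i(z) w p`. -/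
def fext (f : Fin n → Bool → Bool → ℝ → ℝ) (i : Fin n) (p w z : ℝ) : ℝ :=
  f i false false z + (f i false true z - f i false false z) * w +
    (f i true false z - f i false false z) * p +
    (f i true true z - f i false true z - f i true false z + f i false false z) * w * p

/-- `Q_i = ∑_{j ∈ 𝒩_i} P_j`. -/
def mfQ (Nbr : Fin n → Finset (Fin n)) (P : Fin n → ℝ) (i : Fin n) : ℝ := ∑ j ∈ Nbr i, P j

/-- One step of the mean-field dynamical system. -/
def mfStep (Nbr : Fin n → Finset (Fin n)) (f : Fin n → Bool → Bool → ℝ → ℝ)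
    (π : Fin n → ℝ) (P : Fin n → ℝ) : Fin n → ℝ :=
  fun i => fext f i (P i) (π i) (mfQ Nbr P i)

/-- `P` is a fixed point of the mean-field dynamical system, lying in `[0,1]^n`. -/
def IsMFFixed (Nbr : Fin n → Finset (Fin n)) (f : Fin n → Bool → Bool → ℝ → ℝ)
    (π : Fin n → ℝ) (P : Fin n → ℝ) : Prop :=
  (∀ i, P i ∈ Set.Icc (0:ℝ) 1) ∧ mfStep Nbr f π P = P

/-- Law of a vector of independent Bernoulli(P i) coordinates. -/
def prodLaw (P : Fin n → ℝ) (y : State n) : ℝ := ∏ i, if y i then P i else 1 - P i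

/-- Probability of the treatment vector `w` under independent Bernoulli(π i). -/
def wProb (π : Fin n → ℝ) (w : State n) : ℝ := ∏ i, if w i then π i else 1 - π i

/-- Conditional probability of the next state `y'` given state `y` and treatments `w`. -/
def condProb (Nbr : Fin n → Finset (Fin n)) (f : Fin n → Bool → Bool → ℝ → ℝ)
    (y w y' : State n) : ℝ :=
  ∏ i, if y' i then f i (y i) (w i) (zc Nbr y i) else 1 - f i (y i) (w i) (zc Nbr y i)

/-- Probability of the trajectory `(Y_1, …, Y_{T+1}; W_1, …, W_T)` (indexed from `0` in Lean)
of the MDP with Bernoulli treatments, with initial distribution `ν₀`. -/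
def trajProb (Nbr : Fin n → Finset (Fin n)) (f : Fin n → Bool → Bool → ℝ → ℝ)
    (π : Fin n → ℝ) (T : ℕ) (ν₀ : State n → ℝ)
    (Y : Fin (T + 1) → State n) (W : Fin T → State n) : ℝ :=
  ν₀ (Y 0) * ∏ t : Fin T, wProb π (W t) * condProb Nbr f (Y t.castSucc) (W t) (Y t.succ)

/-- The estimator `f̂_i(y,w)` computed from the trajectory (convention `0/0 = 0`,
which is Lean's division). -/
def fhat {T : ℕ} (Y : Fin (T + 1) → State n) (W : Fin T → State n)
    (i : Fin n) (y w : Bool) : ℝ :=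
  (∑ t : Fin T, if Y t.castSucc i = y ∧ W t i = w then (if Y t.succ i then (1:ℝ) else 0) else 0) /
  (∑ t : Fin T, if Y t.castSucc i = y ∧ W t i = w then (1:ℝ) else 0)

/-- The undirected-graph structure: symmetric neighborhoods without self-loops. -/
def GoodGraph (Nbr : Fin n → Finset (Fin n)) : Prop :=
  (∀ i j, i ∈ Nbr j ↔ j ∈ Nbr i) ∧ ∀ i, i ∉ Nbr i

/-- `f` takes values strictly between 0 and 1. -/
def PosF (f : Fin n → Bool → Bool → ℝ → ℝ) : Prop :=
  ∀ i y w z, 0 ≤ z → f i y w z ∈ Set.Ioo (0:ℝ) 1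

/-- The regularity assumptions: `L`-Lipschitzness in the third argument, the bound `B` on
the effect of the first argument, maximal degree `D`, and the contraction condition
`B + L·D ≤ C < 1`. -/
def Regular (Nbr : Fin n → Finset (Fin n)) (f : Fin n → Bool → Bool → ℝ → ℝ)
    (L B : ℝ) (D : ℕ) (C : ℝ) : Prop :=
  0 ≤ L ∧
  (∀ i y w z₁ z₂, 0 ≤ z₁ → 0 ≤ z₂ → |f i y w z₁ - f i y w z₂| ≤ L * |z₁ - z₂|) ∧
  (∀ i w z, 0 ≤ z → |f i true w z - f i false w z| ≤ B) ∧
  (∀ i, (Nbr i).card ≤ D) ∧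
  B + L * D ≤ C ∧ C < 1

/-- Adjacency matrix of the interference graph. -/
def adjMat (Nbr : Fin n → Finset (Fin n)) : Matrix (Fin n) (Fin n) ℝ :=
  Matrix.of fun i j => if j ∈ Nbr i then (1:ℝ) else 0


/-- Indicator of `Y_i = 1` as a real-valued function of the state. -/
def Yi (i : Fin n) (s : State n) : ℝ := if s i then 1 else 0

/-- `a_i(z) = f_i(0,0,z)`. -/
def aF (f : Fin n → Bool → Bool → ℝ → ℝ) (i : Fin n) (z : ℝ) : ℝ := f i false false z

/-- `b_i(z) = f_i(0,1,z) - f_i(0,0,z)`. -/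
def bF (f : Fin n → Bool → Bool → ℝ → ℝ) (i : Fin n) (z : ℝ) : ℝ :=
  f i false true z - f i false false z

/-- `c_i(z) = f_i(1,0,z) - f_i(0,0,z)`. -/
def cF (f : Fin n → Bool → Bool → ℝ → ℝ) (i : Fin n) (z : ℝ) : ℝ :=
  f i true false z - f i false false z

/-- `d_i(z) = f_i(1,1,z) - f_i(0,1,z) - f_i(1,0,z) + f_i(0,0,z)`. -/
def dF (f : Fin n → Bool → Bool → ℝ → ℝ) (i : Fin n) (z : ℝ) : ℝ :=
  f i true true z - f i false true z - f i true false z + f i false false z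

/-- `â_i` computed from the trajectory. -/
def ahat {T : ℕ} (Y : Fin (T + 1) → State n) (W : Fin T → State n) (i : Fin n) : ℝ :=
  fhat Y W i false false

/-- `b̂_i` computed from the trajectory. -/
def bhat {T : ℕ} (Y : Fin (T + 1) → State n) (W : Fin T → State n) (i : Fin n) : ℝ :=
  fhat Y W i false true - fhat Y W i false false

/-- `ĉ_i` computed from the trajectory. -/
def chat {T : ℕ} (Y : Fin (T + 1) → State n) (W : Fin T → State n) (i : Fin n) : ℝ :=
  fhat Y W i true false - fhat Y W i false false

/-- `d̂_i` computed from the trajectory. -/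
def dhat {T : ℕ} (Y : Fin (T + 1) → State n) (W : Fin T → State n) (i : Fin n) : ℝ :=
  fhat Y W i true true + fhat Y W i false false - fhat Y W i false true - fhat Y W i true false

/-- The plug-in estimator `τ̂_LDE(γ₁, γ₂)` of the long-term direct effect. -/
def ldeHat {T : ℕ} (Y : Fin (T + 1) → State n) (W : Fin T → State n) (γ₁ γ₂ : ℝ) : ℝ :=
  (1 / (n : ℝ)) * ∑ i : Fin n,
    ((ahat Y W i + bhat Y W i * γ₁) / (1 - chat Y W i - dhat Y W i * γ₁) -
      (ahat Y W i + bhat Y W i * γ₂) / (1 - chat Y W i - dhat Y W i * γ₂))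

/-- `P̂_i = (1/T) ∑_{t=1}^T Y_{it}`. -/
def Phat {T : ℕ} (Y : Fin (T + 1) → State n) (i : Fin n) : ℝ :=
  (∑ t : Fin T, if Y t.castSucc i then (1 : ℝ) else 0) / T

/-- The regression estimator `f̂'_i(y,w)_{δ_T}` of the derivative of `f_i` in its third
argument, computed from the trajectory (`Dr` is the degree bound `D_n`, `δ` is `δ_T`). -/
def fhatD (Nbr : Fin n → Finset (Fin n)) {T : ℕ}
    (Y : Fin (T + 1) → State n) (W : Fin T → State n)
    (i : Fin n) (y w : Bool) (Dr δ : ℝ) : ℝ :=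
  let ind : Fin T → ℝ := fun t => if Y t.castSucc i = y ∧ W t i = w then 1 else 0
  let cnt : ℝ := ∑ t, ind t
  let Ybar : ℝ := (∑ t, ind t * (if Y t.succ i then (1 : ℝ) else 0)) / cnt
  let Zbar : ℝ := (∑ t, ind t * zc Nbr (Y t.castSucc) i) / cnt
  (∑ t, ind t * ((if Y t.succ i then (1 : ℝ) else 0) - Ybar) * (zc Nbr (Y t.castSucc) i - Zbar)) /
    max (Dr * T * δ) (∑ t, ind t * (zc Nbr (Y t.castSucc) i - Zbar) ^ 2)

/-- The plug-in estimator `τ̂_LTE(π + Δv, π)/Δ = (1/n)·𝟙ᵀ(M_η − D̂A − Ŵ_κ)⁻¹ û`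
of the (rescaled) long-term total effect. -/
def lteHatOverDelta (Nbr : Fin n → Finset (Fin n)) (π v : Fin n → ℝ) {T : ℕ}
    (Y : Fin (T + 1) → State n) (W : Fin T → State n) (Dn : ℕ) (δ η κ : ℝ) : ℝ :=
  let Dh : Fin n → ℝ := fun i =>
    (1 - π i) * (1 - Phat Y i) * fhatD Nbr Y W i false false Dn δ +
      π i * (1 - Phat Y i) * fhatD Nbr Y W i false true Dn δ +
      Phat Y i * (1 - π i) * fhatD Nbr Y W i true false Dn δ +
      Phat Y i * π i * fhatD Nbr Y W i true true Dn δ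
  let ω : Fin n → ℝ := fun i => min (1 - κ) (chat Y W i + dhat Y W i * π i)
  let u : Fin n → ℝ := fun i => (bhat Y W i + dhat Y W i * Phat Y i) * v i
  let Mη : Matrix (Fin n) (Fin n) ℝ :=
    Matrix.diagonal fun i => max 1 (Dh i * Dn / (1 - η) + ω i)
  (1 / (n : ℝ)) *
    ∑ i : Fin n, ((Mη - Matrix.diagonal Dh * adjMat Nbr - Matrix.diagonal ω)⁻¹.mulVec u) i

end MRT


end

/-!
Couple the two chains step by step: from a pair of states `(x, y)`, draw each next coordinate
`i` from the maximal coupling of Bernoulli(`p_i(x)`) and Bernoulli(`p_i(y)`), independently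
over `i`. The next disagreements are then independent Bernoulli(`|p_j(x) - p_j(y)|`), so the
third moment of their number on `𝒩_i` is at most `m (m + 1) (m + 2) ≤ (m + 1)³`, `m` being its
mean. The regularity assumptions give
`|p_j(x) - p_j(y)| ≤ B |x_j - y_j| + L ∑_{k ∈ 𝒩_j} |x_k - y_k|`, and Minkowski's inequality
in `L³` of the current coupling turns this into a new `d_{E,3}`-cost of at most
`(B + L D) d + 1 ≤ C d + 1`, `d` being the current one.
-/

noncomputable section

namespace MRT

open Finset

variable {n : ℕ}

section BernoulliCoupling

variable (p q : ℝ)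

/-- The maximal coupling of Bernoulli(`p`) and Bernoulli(`q`). -/
def bernCoupling : Bool → Bool → ℝ
  | true, true => min p q
  | true, false => max (p - q) 0
  | false, true => max (q - p) 0
  | false, false => min (1 - p) (1 - q)

variable {p q} in
lemma bernCoupling_nonneg (hp : p ∈ Set.Icc (0 : ℝ) 1) (hq : q ∈ Set.Icc (0 : ℝ) 1)
    (a b : Bool) : 0 ≤ bernCoupling p q a b := by
  obtain ⟨hp0, hp1⟩ := hp
  obtain ⟨hq0, hq1⟩ := hq
  cases a <;> cases b <;> simp only [bernCoupling, le_min_iff, le_max_iff] <;> grind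

lemma sum_bernCoupling_right (a : Bool) :
    ∑ b, bernCoupling p q a b = if a then p else 1 - p := by
  cases a <;> simp only [bernCoupling, Fintype.sum_bool] <;> grind

lemma sum_bernCoupling_left (b : Bool) :
    ∑ a, bernCoupling p q a b = if b then q else 1 - q := by
  cases b <;> simp only [bernCoupling, Fintype.sum_bool] <;> grind

lemma sum_sum_bernCoupling : ∑ a, ∑ b, bernCoupling p q a b = 1 := by
  simp only [sum_bernCoupling_right]
  simp

lemma sum_sum_bernCoupling_mul_ne :
    ∑ a, ∑ b, bernCoupling p q a b * (if a = b then 0 else 1) = |p - q| := by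
  simp only [Fintype.sum_bool, bernCoupling]
  rcases le_total p q with h | h
  · simp [abs_of_nonpos (sub_nonpos.2 h), h]
  · simp [abs_of_nonneg (sub_nonneg.2 h), h]

end BernoulliCoupling

def disagree (x y : State n) (j : Fin n) : ℝ := if x j = y j then 0 else 1

lemma disagree_nonneg (x y : State n) (j : Fin n) : 0 ≤ disagree x y j := by
  unfold disagree; split <;> norm_num

lemma isIdempotentElem_disagree (x y : State n) (j : Fin n) :
    IsIdempotentElem (disagree x y j) := by
  unfold disagree; split <;> simp [IsIdempotentElem]

def prodCoupling (P Q : Fin n → ℝ) (p : State n × State n) : ℝ :=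
  ∏ i, bernCoupling (P i) (Q i) (p.1 i) (p.2 i)

lemma sum_pair_prod (F : Fin n → Bool → Bool → ℝ) :
    ∑ p : State n × State n, ∏ i, F i (p.1 i) (p.2 i) = ∏ i, ∑ a, ∑ b, F i a b := by
  simp only [Fintype.sum_prod_type, Fintype.prod_sum]

lemma prodCoupling_nonneg {P Q : Fin n → ℝ} (hP : ∀ i, P i ∈ Set.Icc (0 : ℝ) 1)
    (hQ : ∀ i, Q i ∈ Set.Icc (0 : ℝ) 1) (p : State n × State n) : 0 ≤ prodCoupling P Q p :=
  prod_nonneg fun i _ => bernCoupling_nonneg (hP i) (hQ i) _ _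

lemma sum_prodCoupling_snd (P Q : Fin n → ℝ) (x : State n) :
    ∑ y, prodCoupling P Q (x, y) = prodLaw P x := by
  simp only [prodCoupling, prodLaw]
  rw [← Fintype.prod_sum]
  exact prod_congr rfl fun i _ => sum_bernCoupling_right _ _ _

lemma sum_prodCoupling_fst (P Q : Fin n → ℝ) (y : State n) :
    ∑ x, prodCoupling P Q (x, y) = prodLaw Q y := by
  simp only [prodCoupling, prodLaw]
  rw [← Fintype.prod_sum fun i a => bernCoupling (P i) (Q i) a (y i)]
  exact prod_congr rfl fun i _ => sum_bernCoupling_left _ _ _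

lemma sum_prodCoupling_mul_prod_disagree (P Q : Fin n → ℝ) (u : Finset (Fin n)) :
    ∑ p, prodCoupling P Q p * ∏ j ∈ u, disagree p.1 p.2 j = ∏ j ∈ u, |P j - Q j| := by
  classical
  calc _ = ∑ p : State n × State n, ∏ i, bernCoupling (P i) (Q i) (p.1 i) (p.2 i) *
        (if i ∈ u then (if p.1 i = p.2 i then 0 else 1) else 1) := by
        refine sum_congr rfl fun p _ => ?_
        rw [← Fintype.prod_ite_mem, prodCoupling, ← prod_mul_distrib]
        rfl
    _ = ∏ i, if i ∈ u then |P i - Q i| else 1 := by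
        rw [sum_pair_prod fun i a b =>
          bernCoupling (P i) (Q i) a b * if i ∈ u then (if a = b then 0 else 1) else 1]
        refine prod_congr rfl fun i _ => ?_
        split_ifs
        · exact sum_sum_bernCoupling_mul_ne _ _
        · simpa using sum_sum_bernCoupling _ _
    _ = _ := Fintype.prod_ite_mem u _

section Combinatorics

variable {α : Type*} [DecidableEq α]

lemma prod_insert_of_isIdempotentElem {g : α → ℝ} (hg : ∀ a, IsIdempotentElem (g a))
    (j : α) (t : Finset α) : ∏ a ∈ insert j t, g a = g j * ∏ a ∈ t, g a := by
  by_cases hj : j ∈ t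
  · rw [insert_eq_of_mem hj, ← mul_prod_erase t g hj, ← mul_assoc, (hg j).eq]
  · exact prod_insert hj

lemma sum_prod_insert_le {ε : α → ℝ} (hε : ∀ a, 0 ≤ ε a) (s t : Finset α) :
    ∑ l ∈ s, ∏ a ∈ insert l t, ε a ≤ (∑ l ∈ s, ε l + #t) * ∏ a ∈ t, ε a := by
  have hprod : 0 ≤ ∏ a ∈ t, ε a := prod_nonneg fun a _ => hε a
  have hterm : ∀ l, ∏ a ∈ insert l t, ε a ≤ (ε l + if l ∈ t then 1 else 0) * ∏ a ∈ t, ε a := by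
    intro l
    by_cases hl : l ∈ t
    · rw [insert_eq_of_mem hl, if_pos hl]
      nlinarith [hε l]
    · rw [prod_insert hl, if_neg hl, add_zero]
  calc _ ≤ ∑ l ∈ s, (ε l + if l ∈ t then 1 else 0) * ∏ a ∈ t, ε a :=
        sum_le_sum fun l _ => hterm l
    _ = (∑ l ∈ s, ε l + #(s ∩ t)) * ∏ a ∈ t, ε a := by
        rw [← sum_mul, sum_add_distrib, sum_boole, filter_mem_eq_inter]
    _ ≤ _ := by
        gcongr
        exact inter_subset_right

lemma sum_pow_three_eq {g : α → ℝ} (hg : ∀ a, IsIdempotentElem (g a)) (s : Finset α) :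
    (∑ j ∈ s, g j) ^ 3 = ∑ j ∈ s, ∑ k ∈ s, ∑ l ∈ s, ∏ a ∈ insert l (insert k {j}), g a := by
  simp only [prod_insert_of_isIdempotentElem hg, prod_singleton, pow_three, mul_sum,
    mul_comm, mul_left_comm]

lemma sum_sum_sum_prod_insert_le {ε : α → ℝ} (hε : ∀ a, 0 ≤ ε a) (s : Finset α) :
    ∑ j ∈ s, ∑ k ∈ s, ∑ l ∈ s, ∏ a ∈ insert l (insert k {j}), ε a ≤ (∑ j ∈ s, ε j + 1) ^ 3 := by
  set m := ∑ j ∈ s, ε j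
  have hm : 0 ≤ m := sum_nonneg fun j _ => hε j
  calc _ ≤ ∑ j ∈ s, ∑ k ∈ s, (m + 2) * ∏ a ∈ insert k {j}, ε a := by
        gcongr with j _ k _
        refine (sum_prod_insert_le hε s _).trans ?_
        have : (#(insert k {j}) : ℝ) ≤ 2 := by
          exact_mod_cast (card_insert_le k {j}).trans (by simp)
        gcongr
        exact prod_nonneg fun a _ => hε a
    _ ≤ ∑ j ∈ s, (m + 2) * ((m + 1) * ε j) := by
        gcongr with j _
        rw [← mul_sum]
        gcongr
        simpa using sum_prod_insert_le hε s {j}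
    _ = (m + 2) * (m + 1) * m := by rw [← mul_sum, ← mul_sum, mul_assoc]
    _ ≤ (m + 1) ^ 3 := by nlinarith

end Combinatorics

theorem sum_prodCoupling_mul_pow_three_le (P Q : Fin n → ℝ) (s : Finset (Fin n)) :
    ∑ p, prodCoupling P Q p * (∑ j ∈ s, disagree p.1 p.2 j) ^ 3 ≤
      (∑ j ∈ s, |P j - Q j| + 1) ^ 3 := by
  calc _ = ∑ j ∈ s, ∑ k ∈ s, ∑ l ∈ s, ∏ a ∈ insert l (insert k {j}), |P a - Q a| := by
        simp only [sum_pow_three_eq (isIdempotentElem_disagree _ _), mul_sum,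
          ← sum_prodCoupling_mul_prod_disagree P Q]
        rw [sum_comm]
        refine sum_congr rfl fun j _ => ?_
        rw [sum_comm]
        exact sum_congr rfl fun k _ => sum_comm
    _ ≤ _ := sum_sum_sum_prod_insert_le (fun _ => abs_nonneg _) s

section WeightedLpNorm

variable {ι : Type*} [Fintype ι] (k : ℕ) (γ : ι → ℝ)

def weightedLpNorm (F : ι → ℝ) : ℝ := (∑ p, γ p * F p ^ k) ^ ((k : ℝ)⁻¹)

variable {k γ}

lemma weightedLpNorm_nonneg (hγ : ∀ p, 0 ≤ γ p) {F : ι → ℝ} (hF : ∀ p, 0 ≤ F p) :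
    0 ≤ weightedLpNorm k γ F :=
  Real.rpow_nonneg (sum_nonneg fun p _ => mul_nonneg (hγ p) (pow_nonneg (hF p) k)) _

lemma weightedLpNorm_mono (hγ : ∀ p, 0 ≤ γ p) {F G : ι → ℝ} (hF : ∀ p, 0 ≤ F p)
    (hFG : ∀ p, F p ≤ G p) : weightedLpNorm k γ F ≤ weightedLpNorm k γ G :=
  Real.rpow_le_rpow (sum_nonneg fun p _ => mul_nonneg (hγ p) (pow_nonneg (hF p) k))
    (sum_le_sum fun p _ => mul_le_mul_of_nonneg_left (pow_le_pow_left₀ (hF p) (hFG p) k) (hγ p))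
    (by positivity)

lemma weightedLpNorm_const_mul (hk : k ≠ 0) (hγ : ∀ p, 0 ≤ γ p) {c : ℝ} (hc : 0 ≤ c)
    {F : ι → ℝ} (hF : ∀ p, 0 ≤ F p) :
    weightedLpNorm k γ (fun p => c * F p) = c * weightedLpNorm k γ F := by
  simp only [weightedLpNorm, mul_pow, mul_left_comm _ (c ^ k), ← mul_sum]
  rw [Real.mul_rpow (by positivity)
    (sum_nonneg fun p _ => mul_nonneg (hγ p) (pow_nonneg (hF p) k)),
    ← Real.rpow_natCast, ← Real.rpow_mul hc, mul_inv_cancel₀ (by exact_mod_cast hk),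
    Real.rpow_one]

lemma weightedLpNorm_one (hγ : ∑ p, γ p = 1) :
    weightedLpNorm k γ (fun _ => 1) = 1 := by
  simp [weightedLpNorm, hγ]

lemma weightedLpNorm_add_le (hk : 1 ≤ k) (hγ : ∀ p, 0 ≤ γ p) {F G : ι → ℝ}
    (hF : ∀ p, 0 ≤ F p) (hG : ∀ p, 0 ≤ G p) :
    weightedLpNorm k γ (fun p => F p + G p) ≤ weightedLpNorm k γ F + weightedLpNorm k γ G := by
  -- Minkowski's inequality for the vectors `γ^(1/k) F` and `γ^(1/k) G`.
  have hk' : (k : ℝ) ≠ 0 := by positivity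
  have hpow : ∀ p (H : ι → ℝ), 0 ≤ H p →
      (γ p ^ (k : ℝ)⁻¹ * H p) ^ (k : ℝ) = γ p * H p ^ k := fun p H hH => by
    rw [Real.mul_rpow (Real.rpow_nonneg (hγ p) _) hH, ← Real.rpow_mul (hγ p),
      inv_mul_cancel₀ hk', Real.rpow_one, Real.rpow_natCast]
  have h := Real.Lp_add_le_of_nonneg (s := univ) (f := fun p => γ p ^ (k : ℝ)⁻¹ * F p)
    (g := fun p => γ p ^ (k : ℝ)⁻¹ * G p) (p := k) (by exact_mod_cast hk)
    (fun p _ => mul_nonneg (Real.rpow_nonneg (hγ p) _) (hF p))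
    (fun p _ => mul_nonneg (Real.rpow_nonneg (hγ p) _) (hG p))
  simp only [← mul_add, one_div] at h
  simpa only [weightedLpNorm, hpow _ _ (hF _), hpow _ _ (hG _),
    hpow _ (fun p => F p + G p) (add_nonneg (hF _) (hG _))] using h

lemma weightedLpNorm_sum_le (hk : 1 ≤ k) (hγ : ∀ p, 0 ≤ γ p) {β : Type*} (s : Finset β)
    {u : β → ι → ℝ} (hu : ∀ b p, 0 ≤ u b p) :
    weightedLpNorm k γ (fun p => ∑ b ∈ s, u b p) ≤ ∑ b ∈ s, weightedLpNorm k γ (u b) := by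
  classical
  induction s using Finset.induction_on with
  | empty =>
    simp [weightedLpNorm, zero_pow (by omega : k ≠ 0),
      Real.zero_rpow (by positivity : (k : ℝ)⁻¹ ≠ 0)]
  | insert b s hb ih =>
    simp only [sum_insert hb]
    exact (weightedLpNorm_add_le hk hγ (hu b) fun p => sum_nonneg fun b _ => hu b p).trans
      (add_le_add_right ih _)

end WeightedLpNorm

lemma IsCoupling.sum_mul_fst {γ : State n × State n → ℝ} {ν₁ ν₂ : State n → ℝ}
    (hγ : IsCoupling γ ν₁ ν₂) (g : State n → ℝ) : ∑ p, γ p * g p.1 = ∑ x, ν₁ x * g x := by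
  rw [Fintype.sum_prod_type]
  exact sum_congr rfl fun x _ => by rw [← hγ.2.1 x, sum_mul]

lemma IsCoupling.sum_mul_snd {γ : State n × State n → ℝ} {ν₁ ν₂ : State n → ℝ}
    (hγ : IsCoupling γ ν₁ ν₂) (g : State n → ℝ) : ∑ p, γ p * g p.2 = ∑ y, ν₂ y * g y := by
  rw [Fintype.sum_prod_type_right]
  exact sum_congr rfl fun y _ => by rw [← hγ.2.2 y, sum_mul]

lemma IsCoupling.sum_eq_one {γ : State n × State n → ℝ} {ν₁ ν₂ : State n → ℝ}
    (hγ : IsCoupling γ ν₁ ν₂) (hν₁ : IsDist ν₁) : ∑ p, γ p = 1 := by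
  simpa [hν₁.2] using hγ.sum_mul_fst fun _ => 1

lemma isCoupling_mul {ν₁ ν₂ : State n → ℝ} (h₁ : IsDist ν₁) (h₂ : IsDist ν₂) :
    IsCoupling (fun p => ν₁ p.1 * ν₂ p.2) ν₁ ν₂ :=
  ⟨fun p => mul_nonneg (h₁.1 p.1) (h₂.1 p.2),
    fun x => by simp [← mul_sum, h₂.2], fun y => by simp [← sum_mul, h₁.2]⟩

/-- `d_{E,k}(X, Y)` for `(X, Y)` distributed according to `γ`. -/
def dECost (Nbr : Fin n → Finset (Fin n)) (k : ℕ) (γ : State n × State n → ℝ) : ℝ :=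
  ⨆ i, weightedLpNorm k γ fun p => nbrDiff Nbr i p.1 p.2

lemma nbrDiff_nonneg (Nbr : Fin n → Finset (Fin n)) (i : Fin n) (x y : State n) :
    0 ≤ nbrDiff Nbr i x y :=
  sum_nonneg fun j _ => disagree_nonneg x y j

lemma dECost_nonneg (Nbr : Fin n → Finset (Fin n)) (k : ℕ) {γ : State n × State n → ℝ}
    (hγ : ∀ p, 0 ≤ γ p) : 0 ≤ dECost Nbr k γ :=
  Real.iSup_nonneg fun _ => weightedLpNorm_nonneg hγ fun _ => nbrDiff_nonneg _ _ _ _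

lemma weightedLpNorm_le_dECost (Nbr : Fin n → Finset (Fin n)) (k : ℕ)
    (γ : State n × State n → ℝ) (i : Fin n) :
    weightedLpNorm k γ (fun p => nbrDiff Nbr i p.1 p.2) ≤ dECost Nbr k γ :=
  le_ciSup (Set.finite_range fun i => weightedLpNorm k γ fun p => nbrDiff Nbr i p.1 p.2).bddAbove i

lemma WdE_eq_sInf (Nbr : Fin n → Finset (Fin n)) (k : ℕ) (ν₁ ν₂ : State n → ℝ) :
    WdE Nbr k ν₁ ν₂ = sInf {c | ∃ γ, IsCoupling γ ν₁ ν₂ ∧ c = dECost Nbr k γ} :=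
  rfl

lemma WdE_eq_zero_of_isEmpty [IsEmpty (Fin n)] (Nbr : Fin n → Finset (Fin n)) (k : ℕ)
    {ν₁ ν₂ : State n → ℝ} (hν : ∃ γ, IsCoupling γ ν₁ ν₂) : WdE Nbr k ν₁ ν₂ = 0 := by
  have hcost : ∀ γ, dECost Nbr k γ = 0 := fun γ => Real.iSup_of_isEmpty _
  have hset : {c | ∃ γ, IsCoupling γ ν₁ ν₂ ∧ c = dECost Nbr k γ} = {0} := by
    ext c
    simp only [hcost, Set.mem_ofPred_eq, Set.mem_singleton_iff]
    exact ⟨fun ⟨_, _, hc⟩ => hc, fun hc => hν.imp fun _ hγ => ⟨hγ, hc⟩⟩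
  rw [WdE_eq_sInf, hset, csInf_singleton]

lemma WdE_le_of_forall_isCoupling (Nbr : Fin n → Finset (Fin n)) (k : ℕ)
    {ν₁ ν₂ μ₁ μ₂ : State n → ℝ} {C b : ℝ} (hC : 0 ≤ C) (hν : ∃ γ, IsCoupling γ ν₁ ν₂)
    (h : ∀ γ, IsCoupling γ ν₁ ν₂ →
      ∃ γ', IsCoupling γ' μ₁ μ₂ ∧ dECost Nbr k γ' ≤ C * dECost Nbr k γ + b) :
    WdE Nbr k μ₁ μ₂ ≤ C * WdE Nbr k ν₁ ν₂ + b := by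
  have hbdd : ∀ ρ₁ ρ₂ : State n → ℝ,
      BddBelow {c | ∃ γ, IsCoupling γ ρ₁ ρ₂ ∧ c = dECost Nbr k γ} := fun _ _ =>
    ⟨0, by rintro _ ⟨γ, hγ, rfl⟩; exact dECost_nonneg Nbr k hγ.1⟩
  have hne : {c | ∃ γ, IsCoupling γ ν₁ ν₂ ∧ c = dECost Nbr k γ}.Nonempty :=
    hν.elim fun γ₀ hγ₀ => ⟨_, γ₀, hγ₀, rfl⟩
  have hmap : C * WdE Nbr k ν₁ ν₂ + b =
      sInf ((fun c => C * c + b) '' {c | ∃ γ, IsCoupling γ ν₁ ν₂ ∧ c = dECost Nbr k γ}) :=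
    Monotone.map_csInf_of_continuousAt (f := fun c => C * c + b) (by fun_prop)
      (fun _ _ hc => by dsimp only; gcongr) hne (hbdd ν₁ ν₂)
  rw [hmap, WdE_eq_sInf]
  refine le_csInf (hne.image _) ?_
  rintro _ ⟨_, ⟨γ, hγ, rfl⟩, rfl⟩
  obtain ⟨γ', hγ', hle⟩ := h γ hγ
  exact (csInf_le (hbdd μ₁ μ₂) ⟨γ', hγ', rfl⟩).trans hle

section CoupledStep

variable (P : State n → Fin n → ℝ)

/-- `P y i` is the probability that coordinate `i` is `1` one step after state `y`. -/
def coupledStep (γ : State n × State n → ℝ) (p' : State n × State n) : ℝ :=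
  ∑ p, γ p * prodCoupling (P p.1) (P p.2) p'

variable {P}

lemma isCoupling_coupledStep (hP : ∀ y i, P y i ∈ Set.Icc (0 : ℝ) 1)
    {γ : State n × State n → ℝ} {ν₁ ν₂ : State n → ℝ} (hγ : IsCoupling γ ν₁ ν₂) :
    IsCoupling (coupledStep P γ) (fun y' => ∑ y, ν₁ y * prodLaw (P y) y')
      (fun y' => ∑ y, ν₂ y * prodLaw (P y) y') := by
  refine ⟨fun p' => sum_nonneg fun p _ =>
      mul_nonneg (hγ.1 p) (prodCoupling_nonneg (hP _) (hP _) p'), fun x' => ?_, fun y' => ?_⟩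
  · simp only [coupledStep]
    rw [sum_comm]
    simp only [← mul_sum, sum_prodCoupling_snd]
    exact hγ.sum_mul_fst fun x => prodLaw (P x) x'
  · simp only [coupledStep]
    rw [sum_comm]
    simp only [← mul_sum, sum_prodCoupling_fst]
    exact hγ.sum_mul_snd fun y => prodLaw (P y) y'

lemma weightedLpNorm_coupledStep_le (hP : ∀ y i, P y i ∈ Set.Icc (0 : ℝ) 1)
    {γ : State n × State n → ℝ} (hγ : ∀ p, 0 ≤ γ p) (s : Finset (Fin n)) :
    weightedLpNorm 3 (coupledStep P γ) (fun p' => ∑ j ∈ s, disagree p'.1 p'.2 j) ≤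
      weightedLpNorm 3 γ (fun p => ∑ j ∈ s, |P p.1 j - P p.2 j| + 1) := by
  refine Real.rpow_le_rpow (sum_nonneg fun p' _ => mul_nonneg
    (sum_nonneg fun p _ => mul_nonneg (hγ p) (prodCoupling_nonneg (hP _) (hP _) p'))
    (pow_nonneg (sum_nonneg fun j _ => disagree_nonneg _ _ j) 3)) ?_ (by positivity)
  simp only [coupledStep, sum_mul]
  rw [sum_comm]
  simp only [mul_assoc, ← mul_sum]
  exact sum_le_sum fun p _ =>
    mul_le_mul_of_nonneg_left (sum_prodCoupling_mul_pow_three_le _ _ s) (hγ p)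

end CoupledStep

section Model

lemma zc_nonneg (Nbr : Fin n → Finset (Fin n)) (y : State n) (i : Fin n) : 0 ≤ zc Nbr y i :=
  sum_nonneg fun j _ => by split <;> norm_num

lemma abs_zc_sub_le (Nbr : Fin n → Finset (Fin n)) (x y : State n) (i : Fin n) :
    |zc Nbr x i - zc Nbr y i| ≤ nbrDiff Nbr i x y := by
  rw [zc, zc, ← sum_sub_distrib]
  refine (abs_sum_le_sum_abs _ _).trans (sum_le_sum fun j _ => ?_)
  cases x j <;> cases y j <;> norm_num

variable {Nbr : Fin n → Finset (Fin n)} {f : Fin n → Bool → Bool → ℝ → ℝ} {π : Fin n → ℝ}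

lemma succProb_mem_Icc (hf : PosF f) (hπ : ∀ i, π i ∈ Set.Icc (0 : ℝ) 1) (y : State n)
    (i : Fin n) : succProb Nbr f π y i ∈ Set.Icc (0 : ℝ) 1 := by
  obtain ⟨ht0, ht1⟩ := hf i (y i) true _ (zc_nonneg Nbr y i)
  obtain ⟨hf0, hf1⟩ := hf i (y i) false _ (zc_nonneg Nbr y i)
  obtain ⟨hπ0, hπ1⟩ := hπ i
  constructor <;> unfold succProb <;> nlinarith

lemma abs_succProb_sub_le {L B : ℝ} (hL : 0 ≤ L)
    (hLip : ∀ i y w z₁ z₂, 0 ≤ z₁ → 0 ≤ z₂ → |f i y w z₁ - f i y w z₂| ≤ L * |z₁ - z₂|)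
    (hB : ∀ i w z, 0 ≤ z → |f i true w z - f i false w z| ≤ B)
    (hπ : ∀ i, π i ∈ Set.Icc (0 : ℝ) 1) (x y : State n) (i : Fin n) :
    |succProb Nbr f π x i - succProb Nbr f π y i| ≤
      B * disagree x y i + L * nbrDiff Nbr i x y := by
  have hzx := zc_nonneg Nbr x i
  have hzy := zc_nonneg Nbr y i
  have hown : ∀ w, |f i (x i) w (zc Nbr x i) - f i (y i) w (zc Nbr x i)| ≤
      B * disagree x y i := fun w => by
    unfold disagree
    cases x i <;> cases y i <;>
      simp only [Bool.false_eq_true, Bool.true_eq_false, if_true, if_false, mul_zero, mul_one,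
        sub_self, abs_zero, le_refl]
    · exact abs_sub_comm (f i false w _) _ ▸ hB i w _ hzx
    · exact hB i w _ hzx
  have hw : ∀ w, |f i (x i) w (zc Nbr x i) - f i (y i) w (zc Nbr y i)| ≤
      B * disagree x y i + L * nbrDiff Nbr i x y := fun w =>
    (abs_sub_le _ (f i (y i) w (zc Nbr x i)) _).trans (add_le_add (hown w)
      ((hLip i (y i) w _ _ hzx hzy).trans (mul_le_mul_of_nonneg_left (abs_zc_sub_le ..) hL)))
  obtain ⟨hπ0, hπ1⟩ := hπ i
  calc _ = |π i * (f i (x i) true (zc Nbr x i) - f i (y i) true (zc Nbr y i)) +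
        (1 - π i) * (f i (x i) false (zc Nbr x i) - f i (y i) false (zc Nbr y i))| := by
        unfold succProb; ring_nf
    _ ≤ π i * (B * disagree x y i + L * nbrDiff Nbr i x y) +
        (1 - π i) * (B * disagree x y i + L * nbrDiff Nbr i x y) := by
        refine (abs_add_le _ _).trans ?_
        rw [abs_mul, abs_mul, abs_of_nonneg hπ0, abs_of_nonneg (sub_nonneg.2 hπ1)]
        exact add_le_add (mul_le_mul_of_nonneg_left (hw true) hπ0)
          (mul_le_mul_of_nonneg_left (hw false) (sub_nonneg.2 hπ1))
    _ = _ := by ring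

lemma weightedLpNorm_nbrDiff_coupledStep_le {L B : ℝ} (hf : PosF f)
    (hπ : ∀ i, π i ∈ Set.Icc (0 : ℝ) 1) (hL : 0 ≤ L)
    (hLip : ∀ i y w z₁ z₂, 0 ≤ z₁ → 0 ≤ z₂ → |f i y w z₁ - f i y w z₂| ≤ L * |z₁ - z₂|)
    (hB : ∀ i w z, 0 ≤ z → |f i true w z - f i false w z| ≤ B)
    {γ : State n × State n → ℝ} (hγ : ∀ p, 0 ≤ γ p) (hγ₁ : ∑ p, γ p = 1) (i : Fin n) :
    weightedLpNorm 3 (coupledStep (succProb Nbr f π) γ) (fun p => nbrDiff Nbr i p.1 p.2) ≤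
      B * weightedLpNorm 3 γ (fun p => nbrDiff Nbr i p.1 p.2) +
        L * ∑ j ∈ Nbr i, weightedLpNorm 3 γ (fun p => nbrDiff Nbr j p.1 p.2) + 1 := by
  have hB0 : 0 ≤ B := (abs_nonneg _).trans (hB i true 0 le_rfl)
  have hnd : ∀ j (p : State n × State n), 0 ≤ nbrDiff Nbr j p.1 p.2 := fun j p =>
    nbrDiff_nonneg Nbr j p.1 p.2
  have hmismatch : ∀ p : State n × State n,
      ∑ j ∈ Nbr i, |succProb Nbr f π p.1 j - succProb Nbr f π p.2 j| ≤
        B * nbrDiff Nbr i p.1 p.2 + L * ∑ j ∈ Nbr i, nbrDiff Nbr j p.1 p.2 := fun p => by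
    rw [nbrDiff, mul_sum, mul_sum, ← sum_add_distrib]
    exact sum_le_sum fun j _ => abs_succProb_sub_le hL hLip hB hπ p.1 p.2 j
  calc _ ≤ weightedLpNorm 3 γ (fun p =>
          ∑ j ∈ Nbr i, |succProb Nbr f π p.1 j - succProb Nbr f π p.2 j| + 1) :=
        weightedLpNorm_coupledStep_le (succProb_mem_Icc hf hπ) hγ (Nbr i)
    _ ≤ weightedLpNorm 3 γ (fun p =>
          B * nbrDiff Nbr i p.1 p.2 + L * ∑ j ∈ Nbr i, nbrDiff Nbr j p.1 p.2 + 1) :=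
        weightedLpNorm_mono hγ (fun p => by positivity) fun p => by gcongr; exact hmismatch p
    _ ≤ weightedLpNorm 3 γ (fun p => B * nbrDiff Nbr i p.1 p.2) +
          weightedLpNorm 3 γ (fun p => L * ∑ j ∈ Nbr i, nbrDiff Nbr j p.1 p.2) +
          weightedLpNorm 3 γ (fun _ => 1) := by
        refine (weightedLpNorm_add_le (by norm_num) hγ (fun p => ?_) fun _ => zero_le_one).trans ?_
        · exact add_nonneg (mul_nonneg hB0 (hnd i p))
            (mul_nonneg hL (sum_nonneg fun j _ => hnd j p))
        gcongr
        exact weightedLpNorm_add_le (by norm_num) hγ (fun p => mul_nonneg hB0 (hnd i p))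
          fun p => mul_nonneg hL (sum_nonneg fun j _ => hnd j p)
    _ ≤ _ := by
        rw [weightedLpNorm_const_mul (by norm_num) hγ hB0 (hnd i),
          weightedLpNorm_const_mul (by norm_num) hγ hL fun p => sum_nonneg fun j _ => hnd j p,
          weightedLpNorm_one hγ₁]
        gcongr
        exact weightedLpNorm_sum_le (by norm_num) hγ (Nbr i) fun j p => hnd j p

lemma dECost_coupledStep_le [Nonempty (Fin n)] {L B : ℝ} {D : ℕ} (hf : PosF f)
    (hπ : ∀ i, π i ∈ Set.Icc (0 : ℝ) 1) (hL : 0 ≤ L)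
    (hLip : ∀ i y w z₁ z₂, 0 ≤ z₁ → 0 ≤ z₂ → |f i y w z₁ - f i y w z₂| ≤ L * |z₁ - z₂|)
    (hB : ∀ i w z, 0 ≤ z → |f i true w z - f i false w z| ≤ B) (hD : ∀ i, #(Nbr i) ≤ D)
    {γ : State n × State n → ℝ} (hγ : ∀ p, 0 ≤ γ p) (hγ₁ : ∑ p, γ p = 1) :
    dECost Nbr 3 (coupledStep (succProb Nbr f π) γ) ≤ (B + L * D) * dECost Nbr 3 γ + 1 := by
  refine ciSup_le fun i =>
    (weightedLpNorm_nbrDiff_coupledStep_le hf hπ hL hLip hB hγ hγ₁ i).trans ?_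
  have hB0 : 0 ≤ B := (abs_nonneg _).trans (hB i true 0 le_rfl)
  have hW := weightedLpNorm_le_dECost Nbr 3 γ
  have hW0 := dECost_nonneg Nbr 3 hγ
  have hDi : (#(Nbr i) : ℝ) ≤ D := by exact_mod_cast hD i
  calc _ ≤ B * dECost Nbr 3 γ + L * ∑ _j ∈ Nbr i, dECost Nbr 3 γ + 1 := by
        gcongr with j _
        exacts [hW i, hW j]
    _ = B * dECost Nbr 3 γ + L * (#(Nbr i) * dECost Nbr 3 γ) + 1 := by
        rw [sum_const, nsmul_eq_mul]
    _ ≤ _ := by nlinarith [mul_le_mul_of_nonneg_right hDi hW0]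

end Model

end MRT

end

open MRT in
theorem WdE3_contraction_general
    (n : ℕ) (Nbr : Fin n → Finset (Fin n)) (f : Fin n → Bool → Bool → ℝ → ℝ)
    (π : Fin n → ℝ) (L B C : ℝ) (D : ℕ)
    (hf : PosF f)
    (hπ : ∀ i, π i ∈ Set.Ioo (0 : ℝ) 1)
    (hReg : Regular Nbr f L B D C)
    (ν₁ ν₂ : State n → ℝ) (h₁ : IsDist ν₁) (h₂ : IsDist ν₂) :
    WdE Nbr 3 (step Nbr f π ν₁) (step Nbr f π ν₂) ≤ C * WdE Nbr 3 ν₁ ν₂ + 1 := by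
  obtain ⟨hL, hLip, hB, hD, hC, -⟩ := hReg
  have hπ' : ∀ i, π i ∈ Set.Icc (0 : ℝ) 1 := fun i => Set.Ioo_subset_Icc_self (hπ i)
  have hstep : ∀ {γ}, IsCoupling γ ν₁ ν₂ →
      IsCoupling (coupledStep (succProb Nbr f π) γ) (step Nbr f π ν₁) (step Nbr f π ν₂) :=
    isCoupling_coupledStep (succProb_mem_Icc hf hπ')
  have hprod := isCoupling_mul h₁ h₂
  rcases isEmpty_or_nonempty (Fin n) with hn | hn
  · rw [WdE_eq_zero_of_isEmpty Nbr 3 ⟨_, hstep hprod⟩, WdE_eq_zero_of_isEmpty Nbr 3 ⟨_, hprod⟩]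
    norm_num
  · have hB0 : 0 ≤ B := (abs_nonneg _).trans (hB (Classical.arbitrary _) true 0 le_rfl)
    have hC0 : 0 ≤ C := le_trans (by positivity) hC
    refine WdE_le_of_forall_isCoupling Nbr 3 hC0 ⟨_, hprod⟩ fun γ hγ => ⟨_, hstep hγ, ?_⟩
    calc _ ≤ (B + L * D) * dECost Nbr 3 γ + 1 :=
          dECost_coupledStep_le hf hπ' hL hLip hB hD hγ.1 (hγ.sum_eq_one h₁)
      _ ≤ C * dECost Nbr 3 γ + 1 := by
          gcongr
          exact dECost_nonneg Nbr 3 hγ.1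

open MRT in
/-- under the regularity assumptions, the transition kernel satisfies
`W_{d_{E,3}}(ν₁ P(π), ν₂ P(π)) ≤ C · W_{d_{E,3}}(ν₁, ν₂) + 1`. -/
theorem WdE3_contraction
    (n : ℕ) (Nbr : Fin n → Finset (Fin n)) (f : Fin n → Bool → Bool → ℝ → ℝ)
    (π : Fin n → ℝ) (L B C : ℝ) (D : ℕ)
    (hG : GoodGraph Nbr)
    (hf : PosF f)
    (hπ : ∀ i, π i ∈ Set.Ioo (0 : ℝ) 1)
    (hReg : Regular Nbr f L B D C)
    (ν₁ ν₂ : State n → ℝ) (h₁ : IsDist ν₁) (h₂ : IsDist ν₂) :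
    WdE Nbr 3 (step Nbr f π ν₁) (step Nbr f π ν₂) ≤ C * WdE Nbr 3 ν₁ ν₂ + 1 :=
  WdE3_contraction_general n Nbr f π L B C D hf hπ hReg ν₁ ν₂ h₁ h₂
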